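/- Let Δx > 0 and let u : ℝ → ℝ be a polynomial function of degree at most 3. For y ∈ ℝ define the P² orthonormal-basis coefficients on the cell [y − Δx/2, y + Δx/2]: a₀(y) = (1/Δx)∫ u dx, a₁(y) = (1/Δx)∫ u(x)·2√3·ξ(x) dx, a₂(y) = (1/Δx)∫ u(x)·(6√5·ξ(x)² − √5/2) dx, where ξ(x) = (x−y)/Δx, and set F(y) = a₀(y) + √3·a₁(y) + √5·a₂(y). Then for every y ∈ ℝ: (√5/Δx)·(F(y) − F(y − Δx) − √12·a₁(y)) = (√5/60)·u'''(y)·Δx². In particular, for cubic u this upwind operator coincides exactly with the corresponding operator built from the exact interface values u(y ± Δx/2). -/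

import Mathlib

/-!
Write `u(y + t) = A + B t + C t² + D t³` on the cell centred at `y`, where `D` is the leading
coefficient of `u` and so does not depend on `y`. The three moments are then explicit, and the
right-boundary value of the `P²` projection is `F(y) = u(y + Δx/2) - D Δx³/20`: the projection
misses the interface value by an amount that is the same on every cell. Hence
`F(y) - F(y - Δx) = u(y + Δx/2) - u(y - Δx/2)`, and a one-line Taylor computation gives
`u(y + Δx/2) - u(y - Δx/2) - √12 a₁(y) = D Δx³/10 = u'''(y) Δx³/60`.
-/

open Real Polynomial

namespace Polynomial

theorem iteratedDeriv_eval {𝕜 : Type*} [NontriviallyNormedField 𝕜] (p : 𝕜[X]) (n : ℕ) :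
    iteratedDeriv n (fun x => p.eval x) = fun x => (derivative^[n] p).eval x := by
  induction n with
  | zero => simp
  | succ n ih =>
    rw [iteratedDeriv_succ, ih, Function.iterate_succ_apply']
    ext x
    exact Polynomial.deriv _

variable {R : Type*} [CommSemiring R] {p : R[X]}

theorem eval_iterate_derivative_three_of_natDegree_le (hp : p.natDegree ≤ 3) (y : R) :
    (derivative^[3] p).eval y = 6 * p.coeff 3 := by
  have hconst : (derivative^[3] p).natDegree ≤ 0 :=
    (natDegree_iterate_derivative p 3).trans (by omega)
  rw [eq_C_of_natDegree_le_zero hconst, eval_C, coeff_iterate_derivative]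
  norm_num [Nat.descFactorial, nsmul_eq_mul]

theorem eval_eq_of_natDegree_le_three (hp : p.natDegree ≤ 3) (x : R) :
    p.eval x = p.coeff 0 + p.coeff 1 * x + p.coeff 2 * x ^ 2 + p.coeff 3 * x ^ 3 := by
  rw [eval_eq_sum_range' (by omega : p.natDegree < 4)]
  simp [Finset.sum_range_succ]

theorem exists_eval_add_of_natDegree_le_three (hp : p.natDegree ≤ 3) (y : R) :
    ∃ B C : R, ∀ t, p.eval (y + t) = p.eval y + B * t + C * t ^ 2 + p.coeff 3 * t ^ 3 :=
  ⟨p.coeff 1 + 2 * p.coeff 2 * y + 3 * p.coeff 3 * y ^ 2, p.coeff 2 + 3 * p.coeff 3 * y,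
    fun t => by simp only [eval_eq_of_natDegree_le_three hp]; ring⟩

end Polynomial

theorem intervalIntegral.integral_sub_add_eq_integral_comp_add_left (f : ℝ → ℝ) (y r : ℝ) :
    ∫ x in (y - r)..(y + r), f x = ∫ t in -r..r, f (y + t) := by
  rw [intervalIntegral.integral_comp_add_left, ← sub_eq_add_neg]

theorem integral_neg_cubic_mul_quadratic {f : ℝ → ℝ} (r A B C D P Q R : ℝ)
    (hf : ∀ t, f t = (A + B * t + C * t ^ 2 + D * t ^ 3) * (P + Q * t + R * t ^ 2)) :
    ∫ t in -r..r, f t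
      = 2 * r * (A * P + (A * R + B * Q + C * P) * r ^ 2 / 3 + (C * R + D * Q) * r ^ 4 / 5) := by
  have hexpand : f = fun t => A * P + (A * Q + B * P) * t + (A * R + B * Q + C * P) * t ^ 2
      + (B * R + C * Q + D * P) * t ^ 3 + (C * R + D * Q) * t ^ 4 + D * R * t ^ 5 :=
    funext fun t => by rw [hf]; ring
  rw [hexpand, intervalIntegral.integral_add, intervalIntegral.integral_add,
    intervalIntegral.integral_add, intervalIntegral.integral_add, intervalIntegral.integral_add]
  all_goals try exact (by fun_prop : Continuous _).intervalIntegrable _ _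
  simp only [intervalIntegral.integral_const_mul, integral_pow, intervalIntegral.integral_const,
    smul_eq_mul]
  rw [intervalIntegral.integral_const_mul, integral_id]
  ring

section CellMoments

variable {u : ℝ → ℝ} {y h A B C D : ℝ}

theorem cell_mean_of_cubic (hh : h ≠ 0)
    (hu : ∀ t, u (y + t) = A + B * t + C * t ^ 2 + D * t ^ 3) :
    1 / h * ∫ x in (y - h / 2)..(y + h / 2), u x = A + C * h ^ 2 / 12 := by
  rw [intervalIntegral.integral_sub_add_eq_integral_comp_add_left,
    integral_neg_cubic_mul_quadratic (h / 2) A B C D 1 0 0 fun t => by rw [hu]; ring]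
  field_simp
  ring

theorem cell_first_moment_of_cubic (hh : h ≠ 0)
    (hu : ∀ t, u (y + t) = A + B * t + C * t ^ 2 + D * t ^ 3) :
    1 / h * ∫ x in (y - h / 2)..(y + h / 2), u x * (2 * √3 * ((x - y) / h))
      = √3 * (B * h / 6 + D * h ^ 3 / 40) := by
  rw [intervalIntegral.integral_sub_add_eq_integral_comp_add_left,
    integral_neg_cubic_mul_quadratic (h / 2) A B C D 0 (2 * √3 / h) 0 fun t => by rw [hu]; ring]
  field_simp
  ring

theorem cell_second_moment_of_cubic (hh : h ≠ 0)
    (hu : ∀ t, u (y + t) = A + B * t + C * t ^ 2 + D * t ^ 3) :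
    1 / h * ∫ x in (y - h / 2)..(y + h / 2),
        u x * (6 * √5 * ((x - y) / h) ^ 2 - √5 / 2)
      = √5 * C * h ^ 2 / 30 := by
  rw [intervalIntegral.integral_sub_add_eq_integral_comp_add_left,
    integral_neg_cubic_mul_quadratic (h / 2) A B C D (-(√5 / 2)) 0 (6 * √5 / h ^ 2)
      fun t => by rw [hu]; ring]
  field_simp
  ring

theorem cell_right_trace_of_cubic (hh : h ≠ 0)
    (hu : ∀ t, u (y + t) = A + B * t + C * t ^ 2 + D * t ^ 3) :
    (1 / h * ∫ x in (y - h / 2)..(y + h / 2), u x)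
      + √3 * (1 / h * ∫ x in (y - h / 2)..(y + h / 2), u x * (2 * √3 * ((x - y) / h)))
      + √5 * (1 / h * ∫ x in (y - h / 2)..(y + h / 2),
          u x * (6 * √5 * ((x - y) / h) ^ 2 - √5 / 2))
      = u (y + h / 2) - D * h ^ 3 / 20 := by
  have h3 : √3 * √3 = 3 := mul_self_sqrt (by norm_num)
  have h5 : √5 * √5 = 5 := mul_self_sqrt (by norm_num)
  rw [cell_mean_of_cubic hh hu, cell_first_moment_of_cubic hh hu,
    cell_second_moment_of_cubic hh hu, hu]
  linear_combination (B * h / 6 + D * h ^ 3 / 40) * h3 + C * h ^ 2 / 30 * h5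

theorem interface_jump_sub_first_moment_of_cubic (hh : h ≠ 0)
    (hu : ∀ t, u (y + t) = A + B * t + C * t ^ 2 + D * t ^ 3) :
    u (y + h / 2) - u (y - h / 2)
      - √12 * (1 / h * ∫ x in (y - h / 2)..(y + h / 2), u x * (2 * √3 * ((x - y) / h)))
      = D * h ^ 3 / 10 := by
  have h36 : √12 * √3 = 6 := by
    rw [← sqrt_mul (by norm_num), show (12 : ℝ) * 3 = 6 ^ 2 by norm_num, sqrt_sq (by norm_num)]
  rw [cell_first_moment_of_cubic hh hu, hu, sub_eq_add_neg y, hu]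
  linear_combination (-(B * h / 6 + D * h ^ 3 / 40)) * h36

end CellMoments

/-- The upwind spatial operator in the `a₂` equation of the third-order DG scheme
equals `(√5/60)·u'''(y)·Δx²` for cubic `u`; in particular it coincides exactly with
the corresponding operator built from the exact interface values `u(y ± Δx/2)`. -/
theorem dg_p2_a2_operator_upwind_flux (Δx : ℝ) (hΔx : 0 < Δx)
    (u : ℝ → ℝ) (p : Polynomial ℝ) (hp : p.natDegree ≤ 3)
    (hu : ∀ x, u x = p.eval x)
    (a₀ a₁ a₂ F : ℝ → ℝ)
    (ha₀ : ∀ y, a₀ y = (1 / Δx) * ∫ x in (y - Δx / 2)..(y + Δx / 2), u x)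
    (ha₁ : ∀ y, a₁ y = (1 / Δx) * ∫ x in (y - Δx / 2)..(y + Δx / 2),
      u x * (2 * Real.sqrt 3 * ((x - y) / Δx)))
    (ha₂ : ∀ y, a₂ y = (1 / Δx) * ∫ x in (y - Δx / 2)..(y + Δx / 2),
      u x * (6 * Real.sqrt 5 * ((x - y) / Δx) ^ 2 - Real.sqrt 5 / 2))
    (hF : ∀ y, F y = a₀ y + Real.sqrt 3 * a₁ y + Real.sqrt 5 * a₂ y) :
    ∀ y : ℝ,
      (Real.sqrt 5 / Δx) * (F y - F (y - Δx) - Real.sqrt 12 * a₁ y)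
        = (Real.sqrt 5 / 60) * iteratedDeriv 3 u y * Δx ^ 2 ∧
      (Real.sqrt 5 / Δx) * (F y - F (y - Δx) - Real.sqrt 12 * a₁ y)
        = (Real.sqrt 5 / Δx) *
            (u (y + Δx / 2) - u (y - Δx / 2) - Real.sqrt 12 * a₁ y) := by
  have hcubic : ∀ z, ∃ B C : ℝ, ∀ t,
      u (z + t) = u z + B * t + C * t ^ 2 + p.coeff 3 * t ^ 3 := fun z => by
    simpa only [hu] using p.exists_eval_add_of_natDegree_le_three hp z
  have hflux : ∀ z, F z = u (z + Δx / 2) - p.coeff 3 * Δx ^ 3 / 20 := fun z => by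
    obtain ⟨B, C, hBC⟩ := hcubic z
    rw [hF, ha₀, ha₁, ha₂, cell_right_trace_of_cubic hΔx.ne' hBC]
  intro y
  have hjump : F y - F (y - Δx) = u (y + Δx / 2) - u (y - Δx / 2) := by
    rw [hflux, hflux, show y - Δx + Δx / 2 = y - Δx / 2 by ring]
    ring
  have hu''' : iteratedDeriv 3 u y = 6 * p.coeff 3 := by
    rw [funext hu, iteratedDeriv_eval]
    exact eval_iterate_derivative_three_of_natDegree_le hp y
  obtain ⟨B, C, hBC⟩ := hcubic y
  refine ⟨?_, by rw [hjump]⟩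
  rw [hjump, ha₁, interface_jump_sub_first_moment_of_cubic hΔx.ne' hBC, hu''']
  field_simp
  ring
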